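/- arXiv:2510.02548 — 4 statements merged into one kernel-verified Lean document; each statement's English description precedes it below -/
import Mathlib

section
/- For any simple graph G with degree sequence d_1,...,d_n and any positive integer k, the trace of the k-th power of the Laplacian matrix satisfies tr(L(G)^k) ≥ Σ_{i=1}^n d_i (d_i + 1)^{k-1}. -/
open Matrix Polynomial BigOperators

/-- Laplacian matrix of a simple graph over ℝ (classical decidability). -/
noncomputable def lap {V : Type*} [Fintype V] [DecidableEq V] (G : SimpleGraph V) :
    Matrix V V ℝ := by classical exact G.lapMatrix ℝ

/-- `ℓ_k(G) = tr(L(G)^k)`. -/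
noncomputable def lapTr {V : Type*} [Fintype V] [DecidableEq V] (G : SimpleGraph V)
    (k : ℕ) : ℝ := ((lap G) ^ k).trace

/-- Degree of a vertex (classical decidability). -/
noncomputable def deg {V : Type*} [Fintype V] (G : SimpleGraph V) (v : V) : ℕ := by
  classical exact G.degree v

/-- A graph is d-regular when every vertex has degree d. -/
def IsReg {V : Type*} [Fintype V] (G : SimpleGraph V) (d : ℕ) : Prop := ∀ v : V, deg G v = d

/-- The sum Σ_i d_i (d_i+1)^(k-1) over the degree sequence. -/
noncomputable def degSum {V : Type*} [Fintype V] [DecidableEq V] (G : SimpleGraph V)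
    (k : ℕ) : ℝ := ∑ i : V, (deg G i : ℝ) * ((deg G i : ℝ) + 1) ^ (k - 1)

/-- Gap sequence g_k(G) = ℓ_k(G) − Σ_i d_i (d_i+1)^(k-1). -/
noncomputable def gap {V : Type*} [Fintype V] [DecidableEq V] (G : SimpleGraph V)
    (k : ℕ) : ℝ := lapTr G k - degSum G k

/-!
Write `m_j = (L^j)_{ii}` for a vertex `i` of degree `d`. By the spectral theorem
`m_j = ∑ c_l μ_l^j` with weights `c_l ≥ 0` and eigenvalues `μ_l ≥ 0`, so by Cauchy–Schwarz the
sequence `m_j` is log-convex: `m_{j+1}^2 ≤ m_j m_{j+2}`. Hence the ratios `m_{j+1} / m_j` never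
decrease, and the first one is `m_2 / m_1 = (d^2 + d) / d = d + 1`. Therefore
`m_k ≥ (d + 1)^{k-1} m_1 = d (d + 1)^{k-1}`, and summing over the vertices gives the bound.
-/

open Finset

namespace Matrix.IsHermitian

lemma pow_apply_self {ι : Type*} [Fintype ι] [DecidableEq ι] {A : Matrix ι ι ℝ}
    (hA : A.IsHermitian) (m : ℕ) (i : ι) :
    (A ^ m) i i = ∑ j, (hA.eigenvectorUnitary : Matrix ι ι ℝ) i j ^ 2 * hA.eigenvalues j ^ m := by
  conv_lhs => rw [hA.spectral_theorem]
  rw [← map_pow, Unitary.conjStarAlgAut_apply, diagonal_pow, mul_apply]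
  refine sum_congr rfl fun j _ => ?_
  simp only [mul_diagonal, star_apply, star_trivial, Pi.pow_apply, Function.comp_apply,
    RCLike.ofReal_real_eq_id, id]
  ring

end Matrix.IsHermitian

lemma Matrix.PosSemidef.sq_pow_succ_apply_self_le {ι : Type*} [Fintype ι] [DecidableEq ι]
    {A : Matrix ι ι ℝ} (hA : A.PosSemidef) (m : ℕ) (i : ι) :
    ((A ^ (m + 1)) i i) ^ 2 ≤ (A ^ m) i i * (A ^ (m + 2)) i i := by
  simp only [hA.1.pow_apply_self]
  have hμ := hA.eigenvalues_nonneg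
  refine sum_sq_le_sum_mul_sum_of_sq_le_mul _ (fun j _ => by have := hμ j; positivity)
    (fun j _ => by have := hμ j; positivity) fun j _ => le_of_eq ?_
  ring

lemma pow_mul_le_of_sq_le_mul {m : ℕ → ℝ} (hm : ∀ j, 0 ≤ m j)
    (hconv : ∀ j, m (j + 1) ^ 2 ≤ m j * m (j + 2)) {r : ℝ} (hr : 0 ≤ r)
    (hr₂ : m 2 = r * m 1) (k : ℕ) : r ^ k * m 1 ≤ m (k + 1) := by
  have hstep : ∀ j, r * m (j + 1) ≤ m (j + 2) := by
    intro j
    induction j with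
    | zero => exact hr₂.ge
    | succ j ih =>
      rcases (hm (j + 1)).eq_or_lt with h0 | hpos
      · have h := hconv (j + 1)
        rw [← h0, zero_mul] at h
        have : m (j + 2) = 0 := pow_eq_zero_iff two_ne_zero |>.mp (le_antisymm h (sq_nonneg _))
        rw [this, mul_zero]
        exact hm _
      · refine le_of_mul_le_mul_left ?_ hpos
        calc m (j + 1) * (r * m (j + 2)) = r * m (j + 1) * m (j + 2) := by ring
          _ ≤ m (j + 2) * m (j + 2) := by gcongr; exact hm _
          _ = m (j + 2) ^ 2 := (sq _).symm
          _ ≤ m (j + 1) * m (j + 3) := hconv (j + 1)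
  induction k with
  | zero => simp
  | succ k ih =>
    calc r ^ (k + 1) * m 1 = r * (r ^ k * m 1) := by ring
      _ ≤ r * m (k + 1) := by gcongr
      _ ≤ m (k + 2) := hstep k

namespace SimpleGraph

variable {V : Type*} [Fintype V] [DecidableEq V] (G : SimpleGraph V) [DecidableRel G.Adj]

lemma lapMatrix_apply_self (i : V) : G.lapMatrix ℝ i i = G.degree i := by
  simp [lapMatrix, degMatrix]

lemma lapMatrix_sq_apply_self (i : V) :
    (G.lapMatrix ℝ ^ 2) i i = G.degree i * (G.degree i + 1) := by
  simp only [sq, lapMatrix, degMatrix, sub_mul, mul_sub, Matrix.sub_apply, diagonal_mul,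
    mul_diagonal, diagonal_mul_diagonal, adjMatrix_mul_self_apply_self, adjMatrix_apply,
    diagonal_apply_eq, G.irrefl, ite_false, zero_mul, mul_zero, sub_zero, zero_sub,
    sub_neg_eq_add]
  ring

theorem degree_mul_succ_pow_le_lapMatrix_pow_apply_self (i : V) (k : ℕ) :
    (G.degree i : ℝ) * (G.degree i + 1) ^ k ≤ (G.lapMatrix ℝ ^ (k + 1)) i i := by
  have hL := G.posSemidef_lapMatrix ℝ
  have := pow_mul_le_of_sq_le_mul (m := fun j => (G.lapMatrix ℝ ^ j) i i)
    (fun j => (hL.pow j).diag_nonneg) (fun j => hL.sq_pow_succ_apply_self_le j i)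
    (r := G.degree i + 1) (by positivity)
    (by rw [lapMatrix_sq_apply_self, pow_one, lapMatrix_apply_self, mul_comm]) k
  simpa [lapMatrix_apply_self, mul_comm] using this

end SimpleGraph

/-- tr(L(G)^k) ≥ Σ_i d_i (d_i+1)^(k-1) for every positive integer k. -/
theorem stmt2 (n k : ℕ) (hk : 1 ≤ k) (G : SimpleGraph (Fin n)) :
    degSum G k ≤ lapTr G k := by
  classical
  obtain ⟨k, rfl⟩ := Nat.exists_eq_add_of_le' hk
  unfold degSum lapTr lap deg
  rw [trace]
  gcongr with i
  simpa using G.degree_mul_succ_pow_le_lapMatrix_pow_apply_self i k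
end

section
/- For any simple graph G, g_3(G) = 2ν(G), where ν(G) is the number of induced 3-vertex paths in G and g_3(G) = tr(L(G)^3) − Σ_{i=1}^n d_i(d_i+1)^2. -/
open Matrix Polynomial BigOperators

/-- Number of induced 3-vertex paths: 3-element vertex subsets whose induced
subgraph is isomorphic to the path on 3 vertices. -/
noncomputable def nuP3 {V : Type*} [Fintype V] [DecidableEq V] (G : SimpleGraph V) : ℕ :=
  Nat.card {s : Finset V // s.card = 3 ∧
    Nonempty (SimpleGraph.induce (↑s : Set V) G ≃g SimpleGraph.pathGraph 3)}

open Finset SimpleGraph in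
lemma lap_eq {V : Type*} [Fintype V] [DecidableEq V] (G : SimpleGraph V)
    [DecidableRel G.Adj] : lap G = G.lapMatrix ℝ := by unfold lap; congr!

open Finset SimpleGraph in
lemma deg_eq {V : Type*} [Fintype V] (G : SimpleGraph V) [DecidableRel G.Adj] (v : V) :
    deg G v = G.degree v := by unfold deg; congr!

open Finset SimpleGraph in
lemma trace_cube {V : Type*} [Fintype V] [DecidableEq V] (G : SimpleGraph V)
    [DecidableRel G.Adj] :
    ((G.lapMatrix ℝ) ^ 3).trace
      = ∑ i, (G.degree i : ℝ)^3 + 3 * ∑ i, (G.degree i : ℝ)^2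
        - ∑ i, ∑ j, ∑ k, (G.adjMatrix ℝ i j * G.adjMatrix ℝ j k * G.adjMatrix ℝ k i) := by
  set D := G.degMatrix ℝ with hD
  set A := G.adjMatrix ℝ with hA
  have hcube : (G.lapMatrix ℝ) ^ 3
      = D*D*D - D*D*A - D*A*D - A*D*D + D*A*A + A*D*A + A*A*D - A*A*A := by
    rw [lapMatrix]
    noncomm_ring
  rw [hcube]
  simp only [trace_sub, trace_add]
  have h1 : (D*D*D).trace = ∑ i, (G.degree i : ℝ)^3 := by
    simp [hD, degMatrix, diagonal_mul_diagonal, trace_diagonal]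
    ring_nf
  have h0 : ∀ i, A i i = 0 := by intro i; simp [hA]
  have h2 : (D*D*A).trace = 0 := by
    simp [Matrix.trace, hD, degMatrix, diagonal_mul_diagonal, diagonal_mul, Matrix.diag, h0]
  have h3 : (D*A*D).trace = 0 := by
    simp [Matrix.trace, Matrix.diag, hD, degMatrix, mul_diagonal, diagonal_mul, h0]
  have h4 : (A*D*D).trace = 0 := by
    simp [Matrix.trace, Matrix.diag, hD, degMatrix, mul_diagonal, h0]
  have hAA : ∀ i, (A*A) i i = (G.degree i : ℝ) := by
    intro i; rw [hA]; exact G.adjMatrix_mul_self_apply_self i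
  have h5 : (D*A*A).trace = ∑ i, (G.degree i : ℝ)^2 := by
    rw [mul_assoc]
    simp [Matrix.trace, Matrix.diag, hD, degMatrix, diagonal_mul, hAA]
    ring_nf
  have h6 : (A*D*A).trace = ∑ i, (G.degree i : ℝ)^2 := by
    rw [trace_mul_comm, ← mul_assoc]
    simp [Matrix.trace, Matrix.diag, hD, degMatrix, mul_diagonal, hAA]
    ring_nf
  have h7 : (A*A*D).trace = ∑ i, (G.degree i : ℝ)^2 := by
    simp [Matrix.trace, Matrix.diag, hD, degMatrix, mul_diagonal, hAA]
    ring_nf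
  have h8 : (A*A*A).trace = ∑ i, ∑ j, ∑ k, (A i j * A j k * A k i) := by
    simp only [Matrix.trace, Matrix.diag, Matrix.mul_apply, Finset.sum_mul]
    rw [Finset.sum_congr rfl]
    intro i _
    rw [Finset.sum_comm]
  rw [h1, h2, h3, h4, h5, h6, h7, h8]
  ring

open Finset SimpleGraph in
lemma card_filter_triples {V : Type*} [Fintype V] [DecidableEq V] (G : SimpleGraph V)
    [DecidableRel G.Adj] :
    ((Finset.univ.filter (fun p : V × V × V =>
        G.Adj p.1 p.2.1 ∧ G.Adj p.2.1 p.2.2 ∧ ¬ G.Adj p.1 p.2.2 ∧ p.1 ≠ p.2.2)).card : ℝ)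
      = ∑ i, (G.degree i : ℝ)^2 - ∑ i, (G.degree i : ℝ)
        - ∑ i, ∑ j, ∑ k, (G.adjMatrix ℝ i j * G.adjMatrix ℝ j k * G.adjMatrix ℝ k i) := by
  set A := G.adjMatrix ℝ with hA
  have hdeg : ∀ i, (G.degree i : ℝ) = ∑ j, A i j := by
    intro i
    simp [hA, SimpleGraph.degree, neighborFinset_eq_filter, Finset.sum_ite_eq,
      Finset.sum_boole]
  have hsymm : ∀ i j, A i j = A j i := by
    intro i j; simp [hA, adj_comm]
  have key : ∀ i j k : V,
      (if G.Adj i j ∧ G.Adj j k ∧ ¬ G.Adj i k ∧ i ≠ k then (1:ℝ) else 0)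
        = A i j * A j k * (1 - A i k) - (if i = k then A i j else 0) := by
    intro i j k
    by_cases hik : i = k
    · subst hik
      by_cases h1 : G.Adj i j
      · simp [hA, h1, h1.symm, G.irrefl]
      · simp [hA, h1]
    · simp only [hA, adjMatrix_apply]
      by_cases h1 : G.Adj i j <;> by_cases h2 : G.Adj j k <;> by_cases h3 : G.Adj i k <;>
        simp [h1, h2, h3, hik]
  rw [Finset.card_filter]
  push_cast
  rw [Fintype.sum_prod_type]
  simp only [Fintype.sum_prod_type]
  simp only [key]
  have e1 : ∑ i, ∑ j, ∑ k, (A i j * A j k * (1 - A i k) - (if i = k then A i j else 0))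
      = (∑ i, ∑ j, ∑ k, A i j * A j k)
        - (∑ i, ∑ j, ∑ k, A i j * A j k * A i k)
        - (∑ i, ∑ j, ∑ k, (if i = k then A i j else 0)) := by
    simp only [← Finset.sum_sub_distrib]
    congr 1; ext i; congr 1; ext j; congr 1; ext k
    ring
  rw [e1]
  have e2 : ∑ i, ∑ j, ∑ k, A i j * A j k = ∑ i, (G.degree i : ℝ)^2 := by
    have h1 : ∀ i j, ∑ k, A i j * A j k = A i j * (G.degree j : ℝ) := by
      intro i j; rw [← Finset.mul_sum, ← hdeg]
    simp only [h1]
    rw [Finset.sum_comm]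
    have h2 : ∀ j, ∑ i, A i j * (G.degree j : ℝ) = (G.degree j : ℝ)^2 := by
      intro j
      rw [← Finset.sum_mul]
      have h3 : ∑ i, A i j = (G.degree j : ℝ) := by
        rw [hdeg]; exact Finset.sum_congr rfl (fun i _ => hsymm i j)
      rw [h3]; ring
    exact Finset.sum_congr rfl (fun j _ => h2 j)
  have e3 : ∑ i, ∑ j, ∑ k, A i j * A j k * A i k = ∑ i, ∑ j, ∑ k, A i j * A j k * A k i := by
    simp only [hsymm]
  have e4 : ∑ i, ∑ j, ∑ k, (if i = k then A i j else 0) = ∑ i, (G.degree i : ℝ) := by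
    have h1 : ∀ (i j : V), ∑ k, (if i = k then A i j else 0) = A i j := by
      intro i j; simp
    simp only [h1]
    exact Finset.sum_congr rfl (fun i _ => (hdeg i).symm)
  rw [e2, e3, e4]
  ring

open Finset SimpleGraph in
lemma iso_of_path {V : Type*} [DecidableEq V] (G : SimpleGraph V) {i j k : V}
    (hij : G.Adj i j) (hjk : G.Adj j k) (hik : ¬ G.Adj i k) (hik' : i ≠ k) :
    Nonempty (SimpleGraph.induce (↑({i,j,k} : Finset V) : Set V) G ≃g SimpleGraph.pathGraph 3) := by
  have hij' : i ≠ j := hij.ne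
  have hjk' : j ≠ k := hjk.ne
  have hik2 : ¬ G.Adj k i := fun h => hik h.symm
  set s : Finset V := {i,j,k} with hs
  have hi : i ∈ (↑s : Set V) := by simp [hs]
  have hj : j ∈ (↑s : Set V) := by simp [hs]
  have hk : k ∈ (↑s : Set V) := by simp [hs]
  have hmem : ∀ x, x ∈ (↑s : Set V) → x = i ∨ x = j ∨ x = k := by
    intro x hx; simpa [hs] using hx
  refine ⟨⟨⟨fun x => if x.val = i then 0 else if x.val = j then 1 else 2,
      fun m => if m = 0 then ⟨i, hi⟩ else if m = 1 then ⟨j, hj⟩ else ⟨k, hk⟩, ?_, ?_⟩, ?_⟩⟩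
  · rintro ⟨x, hx⟩
    rcases hmem x hx with rfl | rfl | rfl <;>
      simp [hij', hjk', hik', Ne.symm hij', Ne.symm hjk', Ne.symm hik', Subtype.ext_iff]
  · intro m
    fin_cases m <;>
      simp [hij', hjk', hik', Ne.symm hij', Ne.symm hjk', Ne.symm hik']
  · rintro ⟨x, hx⟩ ⟨y, hy⟩
    simp only [Equiv.coe_fn_mk, SimpleGraph.comap_adj, Function.Embedding.coe_subtype]
    rcases hmem x hx with rfl | rfl | rfl <;> rcases hmem y hy with rfl | rfl | rfl <;>
      simp [SimpleGraph.pathGraph_adj, hij', hjk', hik', Ne.symm hij', Ne.symm hjk',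
        Ne.symm hik', hij, hjk, hik, hik2, hij.symm, hjk.symm, G.irrefl]

open Finset SimpleGraph in
lemma path_of_iso {V : Type*} [DecidableEq V] (G : SimpleGraph V) {s : Finset V}
    (h3 : s.card = 3)
    (e : SimpleGraph.induce (↑s : Set V) G ≃g SimpleGraph.pathGraph 3) :
    ∃ x y z : V, G.Adj x y ∧ G.Adj y z ∧ ¬ G.Adj x z ∧ x ≠ z ∧ ({x,y,z} : Finset V) = s := by
  let f := e.symm
  have hadj : ∀ u v : Fin 3, (SimpleGraph.pathGraph 3).Adj u v ↔ G.Adj (f u).val (f v).val := by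
    intro u v
    rw [← f.map_adj_iff]
    exact Iff.rfl
  refine ⟨(f 0).val, (f 1).val, (f 2).val, ?_, ?_, ?_, ?_, ?_⟩
  · rw [← hadj]; rw [SimpleGraph.pathGraph_adj]; simp
  · rw [← hadj]; rw [SimpleGraph.pathGraph_adj]; simp
  · rw [← hadj]; rw [SimpleGraph.pathGraph_adj]; simp
  · intro h
    have h1 : f 0 = f 2 := Subtype.ext h
    have h02 : (0 : Fin 3) = 2 := f.toEquiv.injective h1
    simp at h02
  · have h01 : (f 0).val ≠ (f 1).val := by
      intro h; have h' : (0:Fin 3) = 1 := f.toEquiv.injective (Subtype.ext h); simp at h'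
    have h02 : (f 0).val ≠ (f 2).val := by
      intro h; have h' : (0:Fin 3) = 2 := f.toEquiv.injective (Subtype.ext h); simp at h'
    have h12 : (f 1).val ≠ (f 2).val := by
      intro h; have h' : (1:Fin 3) = 2 := f.toEquiv.injective (Subtype.ext h); simp at h'
    have hsub : ({(f 0).val, (f 1).val, (f 2).val} : Finset V) ⊆ s := by
      intro w hw
      simp only [Finset.mem_insert, Finset.mem_singleton] at hw
      rcases hw with rfl | rfl | rfl <;> exact (f _).property
    apply Finset.eq_of_subset_of_card_le hsub
    rw [h3]
    rw [Finset.card_insert_of_notMem (by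
        simp only [Finset.mem_insert, Finset.mem_singleton]; push_neg; exact ⟨h01, h02⟩),
      Finset.card_insert_of_notMem (by
        simp only [Finset.mem_singleton]; exact h12), Finset.card_singleton]

/-- g_3(G) = 2 ν(G). -/
theorem stmt5 (n : ℕ) (G : SimpleGraph (Fin n)) :
    gap G 3 = 2 * (nuP3 G : ℝ) := by
  classical
  set Q : Finset (Fin n) → Prop := fun s => s.card = 3 ∧
    Nonempty (SimpleGraph.induce (↑s : Set (Fin n)) G ≃g SimpleGraph.pathGraph 3) with hQ
  set S : Finset (Finset (Fin n)) := Finset.univ.filter Q with hS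
  set T : Finset (Fin n × Fin n × Fin n) := Finset.univ.filter
      (fun p : Fin n × Fin n × Fin n =>
      G.Adj p.1 p.2.1 ∧ G.Adj p.2.1 p.2.2 ∧ ¬ G.Adj p.1 p.2.2 ∧ p.1 ≠ p.2.2) with hT
  have hnu : nuP3 G = S.card := by
    rw [nuP3, Nat.card_eq_fintype_card, hS]
    convert Fintype.card_subtype (p := Q)
  have hmap : ∀ p ∈ T, ({p.1, p.2.1, p.2.2} : Finset (Fin n)) ∈ S := by
    rintro ⟨i, j, k⟩ hp
    rw [hT, Finset.mem_filter] at hp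
    obtain ⟨-, hij, hjk, hik, hik'⟩ := hp
    rw [hS, Finset.mem_filter]
    refine ⟨Finset.mem_univ _, ?_, iso_of_path G hij hjk hik hik'⟩
    rw [Finset.card_insert_of_notMem (by simp [hij.ne, hik']),
      Finset.card_insert_of_notMem (by simp [hjk.ne]), Finset.card_singleton]
  have hfib : ∀ s ∈ S, (T.filter (fun p : Fin n × Fin n × Fin n =>
      ({p.1, p.2.1, p.2.2} : Finset (Fin n)) = s)).card = 2 := by
    intro s hsS
    rw [hS, Finset.mem_filter] at hsS
    obtain ⟨-, h3, ⟨e⟩⟩ := hsS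
    obtain ⟨x, y, z, hxy, hyz, hxz, hxz', hset⟩ := path_of_iso G h3 e
    have hzx : ¬ G.Adj z x := fun h => hxz h.symm
    have hfeq : T.filter (fun p : Fin n × Fin n × Fin n =>
        ({p.1, p.2.1, p.2.2} : Finset (Fin n)) = s) = {(x,y,z), (z,y,x)} := by
      ext ⟨i, j, k⟩
      simp only [Finset.mem_filter, hT, Finset.mem_insert, Finset.mem_singleton,
        Prod.mk.injEq, Finset.mem_univ, true_and]
      constructor
      · rintro ⟨⟨hij, hjk, hik, hik'⟩, hfs⟩
        have heq : ({i,j,k} : Finset (Fin n)) = {x,y,z} := hfs.trans hset.symm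
        have hi : i = x ∨ i = y ∨ i = z := by
          have h' : i ∈ ({x,y,z} : Finset (Fin n)) := by rw [← heq]; simp
          simpa using h'
        have hj : j = x ∨ j = y ∨ j = z := by
          have h' : j ∈ ({x,y,z} : Finset (Fin n)) := by rw [← heq]; simp
          simpa using h'
        have hk : k = x ∨ k = y ∨ k = z := by
          have h' : k ∈ ({x,y,z} : Finset (Fin n)) := by rw [← heq]; simp
          simpa using h'
        clear hfs heq
        rcases hi with rfl | rfl | rfl <;> rcases hj with rfl | rfl | rfl <;>
          rcases hk with rfl | rfl | rfl <;>
          simp_all [G.irrefl, hxy.symm, hyz.symm]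
      · rintro (⟨rfl, rfl, rfl⟩ | ⟨rfl, rfl, rfl⟩)
        · exact ⟨⟨hxy, hyz, hxz, hxz'⟩, hset⟩
        · refine ⟨⟨hyz.symm, hxy.symm, hzx, Ne.symm hxz'⟩, ?_⟩
          rw [← hset]
          ext w; simp; tauto
    rw [hfeq]
    rw [Finset.card_insert_of_notMem (by simp [Prod.ext_iff, hxz']), Finset.card_singleton]
  have hTcard : T.card = 2 * S.card := by
    rw [Finset.card_eq_sum_card_fiberwise hmap]
    rw [Finset.sum_congr rfl hfib, Finset.sum_const, smul_eq_mul, mul_comm]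
  have hgap : gap G 3 = ((T.card : ℕ) : ℝ) := by
    rw [gap, lapTr, lap_eq, degSum, trace_cube, hT, card_filter_triples]
    have hds : ∑ i : Fin n, (deg G i : ℝ) * ((deg G i : ℝ) + 1) ^ (3-1)
        = ∑ i : Fin n, ((G.degree i : ℝ)^3 + 2*(G.degree i : ℝ)^2 + (G.degree i : ℝ)) := by
      refine Finset.sum_congr rfl (fun i _ => ?_)
      rw [deg_eq]
      ring
    rw [hds, Finset.sum_add_distrib, Finset.sum_add_distrib, ← Finset.mul_sum]
    ring
  rw [hgap, hTcard, hnu]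
  push_cast
  ring
end

section
/- For an almost-regular graph G with all degrees equal to d−1 or d, the gap sequence is bounded: g_k(G) ≤ n(2d)^k for every positive integer k, where g_k(G) = tr(L(G)^k) − Σ_{i=1}^n d_i (d_i+1)^{k−1}. -/
open Matrix Polynomial BigOperators

open Finset in
lemma rowsum (n d : ℕ) (G : SimpleGraph (Fin n))
    (hdeg : ∀ i : Fin n, deg G i = d - 1 ∨ deg G i = d) (i : Fin n) :
    ∑ j, |lap G i j| ≤ 2 * (d : ℝ) := by
  classical
  have hdegi : (deg G i : ℝ) ≤ d := by
    rcases hdeg i with h | h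
    · rw [h]; exact_mod_cast Nat.sub_le d 1
    · rw [h]
  have hlap : ∀ j, lap G i j = (if i = j then (deg G i : ℝ) else 0) -
      (if G.Adj i j then 1 else 0) := by
    intro j
    simp [lap, deg, SimpleGraph.lapMatrix, SimpleGraph.degMatrix, SimpleGraph.adjMatrix,
      Matrix.diagonal, Matrix.sub_apply]
  have hsum : ∑ j, |lap G i j| =
      ∑ j, ((if i = j then (deg G i : ℝ) else 0) + (if G.Adj i j then 1 else 0)) := by
    refine Finset.sum_congr rfl fun j _ => ?_
    rw [hlap]
    by_cases h : i = j
    · subst h; simp [G.irrefl]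
    · by_cases ha : G.Adj i j <;> simp [h, ha]
  have hadj : ∑ j, (if G.Adj i j then (1 : ℝ) else 0) = (deg G i : ℝ) := by
    rw [Finset.sum_boole]
    simp [deg, SimpleGraph.degree, SimpleGraph.neighborFinset_eq_filter]
  rw [hsum, Finset.sum_add_distrib, hadj, Finset.sum_ite_eq Finset.univ i]
  simp only [Finset.mem_univ, if_true]
  linarith

lemma powsum (n d : ℕ) (G : SimpleGraph (Fin n))
    (hdeg : ∀ i : Fin n, deg G i = d - 1 ∨ deg G i = d) (k : ℕ) (i : Fin n) :
    ∑ j, |((lap G) ^ k) i j| ≤ (2 * (d : ℝ)) ^ k := by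
  induction k generalizing i with
  | zero => simp [Matrix.one_apply, apply_ite abs]
  | succ k ih =>
    have h1 : ∀ j : Fin n, |((lap G) ^ (k + 1)) i j| ≤
        ∑ m, |((lap G) ^ k) i m| * |lap G m j| := by
      intro j
      rw [pow_succ, Matrix.mul_apply]
      refine (Finset.abs_sum_le_sum_abs _ _).trans ?_
      exact le_of_eq (Finset.sum_congr rfl fun m _ => abs_mul _ _)
    calc ∑ j, |((lap G) ^ (k + 1)) i j|
        ≤ ∑ j, ∑ m, |((lap G) ^ k) i m| * |lap G m j| :=
          Finset.sum_le_sum fun j _ => h1 j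
      _ = ∑ m, |((lap G) ^ k) i m| * ∑ j, |lap G m j| := by
          rw [Finset.sum_comm]
          exact Finset.sum_congr rfl fun m _ => (Finset.mul_sum _ _ _).symm
      _ ≤ ∑ m, |((lap G) ^ k) i m| * (2 * (d : ℝ)) :=
          Finset.sum_le_sum fun m _ =>
            mul_le_mul_of_nonneg_left (rowsum n d G hdeg m) (abs_nonneg _)
      _ = (∑ m, |((lap G) ^ k) i m|) * (2 * (d : ℝ)) := by rw [← Finset.sum_mul]
      _ ≤ (2 * (d : ℝ)) ^ k * (2 * (d : ℝ)) := by
          refine mul_le_mul_of_nonneg_right (ih i) ?_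
          positivity
      _ = (2 * (d : ℝ)) ^ (k + 1) := by ring


/-- if every vertex of G has degree d−1 or d, then
g_k(G) ≤ n (2d)^k for every positive integer k. -/
theorem stmt13 (n d : ℕ) (hd : 1 ≤ d) (G : SimpleGraph (Fin n))
    (hdeg : ∀ i : Fin n, deg G i = d - 1 ∨ deg G i = d) :
    ∀ k : ℕ, 1 ≤ k → gap G k ≤ (n : ℝ) * (2 * (d : ℝ)) ^ k := by
  intro k _
  have hds : 0 ≤ degSum G k := by
    refine Finset.sum_nonneg fun i _ => ?_
    positivity
  have htr : lapTr G k ≤ (n : ℝ) * (2 * (d : ℝ)) ^ k := by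
    unfold lapTr Matrix.trace
    calc ∑ i, ((lap G) ^ k).diag i ≤ ∑ i : Fin n, (2 * (d : ℝ)) ^ k := by
          refine Finset.sum_le_sum fun i _ => ?_
          refine (le_abs_self _).trans ?_
          refine le_trans ?_ (powsum n d G hdeg k i)
          exact Finset.single_le_sum (f := fun j => |((lap G) ^ k) i j|)
            (fun j _ => abs_nonneg _) (Finset.mem_univ i)
      _ = (n : ℝ) * (2 * (d : ℝ)) ^ k := by simp [Finset.card_univ, mul_comm]
  unfold gap
  linarith
end

section
/- Let G be a simple graph with Laplacian eigenvalues λ_1,...,λ_n, all lying in [0,n), degree sequence d_1,...,d_n, and gap sequence g_k(G) = tr(L(G)^k) − Σ_i d_i(d_i+1)^{k−1} ≥ 0. Then for every positive integer c and every real x ≥ n: Π_{i=1}^n (1 − λ_i/x) ≤ exp(−Σ_{k=1}^c g_k(G)/(k x^k)) · Π_{i=1}^n (1 − (d_i+1)/x)^{d_i/(d_i+1)}. -/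
open Matrix Polynomial BigOperators

/-!
For `|a| < x` one has `-log (1 - a / x) = ∑_{k ≥ 1} a ^ k / (k x ^ k)`. Applied to the Laplacian
eigenvalues, the `k`-th coefficient of `-log ∏ (1 - λᵢ / x)` is `tr (L ^ k) / (k x ^ k)`; applied to
`a = dᵢ + 1` and scaled by `dᵢ / (dᵢ + 1)`, the `k`-th coefficient of
`-log ∏ (1 - (dᵢ + 1) / x) ^ (dᵢ / (dᵢ + 1))` is `∑ dᵢ (dᵢ + 1) ^ (k - 1) / (k x ^ k)`. The difference
of the two logarithms is therefore `∑_k g_k / (k x ^ k)`, a series of nonnegative terms, which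
dominates each of its partial sums; exponentiating gives the inequality.
-/

namespace Matrix.IsHermitian

variable {𝕜 ι : Type*} [RCLike 𝕜] [Fintype ι] [DecidableEq ι] {A : Matrix ι ι 𝕜}

theorem trace_pow_eq_sum_eigenvalues_pow (hA : A.IsHermitian) (k : ℕ) :
    (A ^ k).trace = ∑ i, (hA.eigenvalues i : 𝕜) ^ k := by
  conv_lhs => rw [hA.spectral_theorem, ← map_pow, Unitary.conjStarAlgAut_apply, trace_mul_cycle,
    Unitary.coe_star_mul_self, one_mul, diagonal_pow, trace_diagonal]
  rfl

theorem trace_pow_eq_sum_pow_of_charpoly_eq (hA : A.IsHermitian) {μ : ι → 𝕜}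
    (hμ : A.charpoly = ∏ i, (X - C (μ i))) (k : ℕ) :
    (A ^ k).trace = ∑ i, μ i ^ k := by
  have hroots : Finset.univ.val.map μ = Finset.univ.val.map (RCLike.ofReal ∘ hA.eigenvalues) := by
    rw [← hA.roots_charpoly_eq_eigenvalues, hμ, Polynomial.roots_prod]
    · simp
    · simp [Finset.prod_ne_zero_iff, Polynomial.X_sub_C_ne_zero]
  rw [hA.trace_pow_eq_sum_eigenvalues_pow]
  simpa [Multiset.map_map, Function.comp_def] using
    (congrArg (fun s => (s.map (· ^ k)).sum) hroots).symm

end Matrix.IsHermitian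

/- The term at `k = 0` is `1 / 0 = 0`, so the series may start at `0`. -/
theorem Real.hasSum_pow_div_log_one_sub_div {a x : ℝ} (h : |a| < x) :
    HasSum (fun k : ℕ => a ^ k / (k * x ^ k)) (-Real.log (1 - a / x)) := by
  have hx : 0 < x := (abs_nonneg a).trans_lt h
  have hax : |a / x| < 1 := by rwa [abs_div, abs_of_pos hx, div_lt_one hx]
  rw [← hasSum_nat_add_iff' 1]
  simpa [div_pow, div_div, mul_comm] using Real.hasSum_pow_div_log_of_abs_lt_one hax

theorem Real.hasSum_mul_pow_pred_div_log_rpow {d x : ℝ} (hd : 0 ≤ d) (h : d = 0 ∨ d + 1 < x) :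
    HasSum (fun k : ℕ => d * (d + 1) ^ (k - 1) / (k * x ^ k))
      (-Real.log ((1 - (d + 1) / x) ^ (d / (d + 1)))) := by
  rcases h with rfl | h
  · simp
  have hx : 0 < x := by linarith
  have hbase : 0 < 1 - (d + 1) / x := sub_pos.2 ((div_lt_one hx).2 h)
  have hterm : (fun k : ℕ => d * (d + 1) ^ (k - 1) / (k * x ^ k)) =
      fun k : ℕ => d / (d + 1) * ((d + 1) ^ k / (k * x ^ k)) := by
    funext k
    rcases k with _ | k
    · simp
    · simp only [Nat.add_sub_cancel, pow_succ]
      field_simp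
  rw [Real.log_rpow hbase, ← mul_neg, hterm]
  exact (Real.hasSum_pow_div_log_one_sub_div (by rwa [abs_of_nonneg (by positivity)])).mul_left _

theorem Real.one_sub_add_one_div_rpow_pos {d x : ℝ} (hd : 0 ≤ d) (h : d = 0 ∨ d + 1 < x) :
    0 < (1 - (d + 1) / x) ^ (d / (d + 1)) := by
  rcases h with rfl | h
  · simp
  · exact Real.rpow_pos_of_pos (sub_pos.2 ((div_lt_one (by linarith)).2 h)) _

theorem prod_le_exp_neg_sum_mul_prod {ι : Type*} [Fintype ι] {p q : ι → ℝ} {f g : ι → ℕ → ℝ}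
    (hp : ∀ i, 0 < p i) (hq : ∀ i, 0 < q i)
    (hf : ∀ i, HasSum (f i) (-Real.log (p i))) (hg : ∀ i, HasSum (g i) (-Real.log (q i)))
    (hfg : ∀ k, ∑ i, g i k ≤ ∑ i, f i k) (s : Finset ℕ) :
    ∏ i, p i ≤ Real.exp (-∑ k ∈ s, (∑ i, f i k - ∑ i, g i k)) * ∏ i, q i := by
  have hprod {r : ι → ℝ} (hr : ∀ i, 0 < r i) : ∏ i, r i = Real.exp (-∑ i, -Real.log (r i)) := by
    simp [Real.exp_sum, Real.exp_log (hr _)]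
  have hdiff : HasSum (fun k => ∑ i, f i k - ∑ i, g i k)
      (∑ i, -Real.log (p i) - ∑ i, -Real.log (q i)) :=
    (hasSum_sum fun i _ => hf i).sub (hasSum_sum fun i _ => hg i)
  have hpartial := sum_le_hasSum s (fun k _ => sub_nonneg.2 (hfg k)) hdiff
  rw [hprod hp, hprod hq, ← Real.exp_add]
  exact Real.exp_le_exp.2 (by linarith)

theorem isHermitian_lap {V : Type*} [Fintype V] [DecidableEq V] (G : SimpleGraph V) :
    (lap G).IsHermitian := by
  classical
  exact G.isHermitian_lapMatrix ℝ

theorem lapTr_eq_sum_pow {V : Type*} [Fintype V] [DecidableEq V] {G : SimpleGraph V}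
    {lam : V → ℝ} (heig : (lap G).charpoly = ∏ i, (X - C (lam i))) (k : ℕ) :
    lapTr G k = ∑ i, lam i ^ k :=
  (isHermitian_lap G).trace_pow_eq_sum_pow_of_charpoly_eq heig k

theorem gap_div_eq {V : Type*} [Fintype V] [DecidableEq V] {G : SimpleGraph V}
    {lam : V → ℝ} (heig : (lap G).charpoly = ∏ i, (X - C (lam i))) (k : ℕ) (x : ℝ) :
    gap G k / (k * x ^ k) = ∑ i, lam i ^ k / (k * x ^ k) -
      ∑ i, (deg G i : ℝ) * ((deg G i : ℝ) + 1) ^ (k - 1) / (k * x ^ k) := by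
  rw [gap, lapTr_eq_sum_pow heig, degSum, sub_div, Finset.sum_div, Finset.sum_div]

theorem stmt19_general (n : ℕ) (G : SimpleGraph (Fin n)) (lam : Fin n → ℝ)
    (heig : (lap G).charpoly = ∏ i : Fin n, (Polynomial.X - Polynomial.C (lam i)))
    (hrange : ∀ i : Fin n, 0 ≤ lam i ∧ lam i < n)
    (hdeg : ∀ i : Fin n, deg G i ≤ n - 2)
    (hgap : ∀ k : ℕ, 1 ≤ k → 0 ≤ gap G k)
    (c : ℕ) (x : ℝ) (hx : (n : ℝ) ≤ x) :
    ∏ i : Fin n, (1 - lam i / x) ≤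
      Real.exp (-(∑ k ∈ Finset.Icc 1 c, gap G k / ((k : ℝ) * x ^ k))) *
        ∏ i : Fin n,
          (1 - ((deg G i : ℝ) + 1) / x) ^ ((deg G i : ℝ) / ((deg G i : ℝ) + 1)) := by
  have hx0 : 0 ≤ x := (Nat.cast_nonneg n).trans hx
  have hlt (i : Fin n) : lam i < x := (hrange i).2.trans_le hx
  have hlam (i : Fin n) : |lam i| < x := by rw [abs_of_nonneg (hrange i).1]; exact hlt i
  have hp (i : Fin n) : 0 < 1 - lam i / x :=
    sub_pos.2 ((div_lt_one ((hrange i).1.trans_lt (hlt i))).2 (hlt i))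
  have hdx (i : Fin n) : (deg G i : ℝ) = 0 ∨ (deg G i : ℝ) + 1 < x := by
    rcases Nat.eq_zero_or_pos (deg G i) with hd | hd
    · exact Or.inl (by exact_mod_cast hd)
    · have hle : deg G i + 2 ≤ n := by have := hdeg i; omega
      have hle' : (deg G i : ℝ) + 2 ≤ n := by exact_mod_cast hle
      exact Or.inr (by linarith)
  have hterm (k : ℕ) : 0 ≤ gap G k / (k * x ^ k) := by
    rcases k with _ | k
    · simp
    · exact div_nonneg (hgap _ k.succ_pos) (by positivity)
  simp_rw [gap_div_eq heig] at hterm ⊢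
  exact prod_le_exp_neg_sum_mul_prod hp
    (fun i => Real.one_sub_add_one_div_rpow_pos (Nat.cast_nonneg _) (hdx i))
    (fun i => Real.hasSum_pow_div_log_one_sub_div (hlam i))
    (fun i => Real.hasSum_mul_pow_pred_div_log_rpow (Nat.cast_nonneg _) (hdx i))
    (fun k => sub_nonneg.1 (hterm k)) _

/-- the key analytic inequality. If the Laplacian eigenvalues lam i of G all
lie in [0,n), every degree is at most n−2, and the gap sequence is nonnegative, then for
every positive integer c and every real x ≥ n,
Π_i (1 − lam i / x) ≤ exp(−Σ_{k=1}^c g_k(G)/(k x^k)) · Π_i (1 − (d_i+1)/x)^(d_i/(d_i+1)). -/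
theorem stmt19 (n : ℕ) (G : SimpleGraph (Fin n)) (lam : Fin n → ℝ)
    (heig : (lap G).charpoly = ∏ i : Fin n, (Polynomial.X - Polynomial.C (lam i)))
    (hrange : ∀ i : Fin n, 0 ≤ lam i ∧ lam i < n)
    (hdeg : ∀ i : Fin n, deg G i ≤ n - 2)
    (hgap : ∀ k : ℕ, 1 ≤ k → 0 ≤ gap G k)
    (c : ℕ) (hc : 1 ≤ c) (x : ℝ) (hx : (n : ℝ) ≤ x) :
    ∏ i : Fin n, (1 - lam i / x) ≤
      Real.exp (-(∑ k ∈ Finset.Icc 1 c, gap G k / ((k : ℝ) * x ^ k))) *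
        ∏ i : Fin n,
          (1 - ((deg G i : ℝ) + 1) / x) ^ ((deg G i : ℝ) / ((deg G i : ℝ) + 1)) :=
  stmt19_general n G lam heig hrange hdeg hgap c x hx
end
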